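/- Let θ be a global action of an inverse semigroupoid S on a set Y and X ⊆ Y. Define X_s = θ_s(X ∩ Y_{s*}) ∩ X and let (θ|_X)_s be the restriction of θ_s to X_{s*} → X_s. Then θ|_X = ({X_s},{(θ|_X)_s}) is a partial action of S on X. -/

import Mathlib

structure InvSgpd (S : Type*) (O : Type*) where
  d : S → O
  c : S → O
  mul : S → S → S
  d_mul : ∀ s t, d s = c t → d (mul s t) = d t
  c_mul : ∀ s t, d s = c t → c (mul s t) = c s
  assoc : ∀ p s t, d p = c s → d s = c t → mul (mul p s) t = mul p (mul s t)
  inv : S → S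
  comp_inv : ∀ s, d s = c (inv s)
  inv_comp : ∀ s, d (inv s) = c s
  mul_inv_mul : ∀ s, mul (mul s (inv s)) s = s
  inv_mul_inv : ∀ s, mul (mul (inv s) s) (inv s) = inv s
  inv_unique : ∀ s t, d s = c t → d t = c s →
    mul (mul s t) s = s → mul (mul t s) t = t → t = inv s

namespace InvSgpd
variable {S O : Type*} (G : InvSgpd S O)
def Composable (s t : S) : Prop := G.d s = G.c t
def Idem (e : S) : Prop := G.Composable e e ∧ G.mul e e = e
def le (s t : S) : Prop :=
  G.d s = G.d t ∧ G.c s = G.c t ∧ s = G.mul t (G.mul (G.inv s) s)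
end InvSgpd

/-- A partial action of an inverse semigroupoid `G` on a set (type) `X`:
`dom s` plays the role of `X_s` and `act s` the role of `θ_s : X_{s*} → X_s`
(as a total map whose values are only relevant on `dom (G.inv s)`). -/
structure PAction {S O : Type*} (G : InvSgpd S O) (X : Type*) where
  dom : S → Set X
  act : S → X → X
  maps : ∀ s, ∀ x ∈ dom (G.inv s), act s x ∈ dom s
  /-- (P1) `θ_e = id_{X_e}` for idempotents. -/
  idem_id : ∀ e, G.Idem e → ∀ x ∈ dom e, act e x = x
  /-- (P1) every point lies in some `X_e` with `e` idempotent. -/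
  cover : ∀ x : X, ∃ e, G.Idem e ∧ x ∈ dom e
  /-- (P2) `X_s ⊆ X_{ss*}`. -/
  dom_mono : ∀ s, dom s ⊆ dom (G.mul s (G.inv s))
  /-- (P3) `θ_t⁻¹(X_t ∩ X_{s*}) = X_{(st)*} ∩ X_{t*}` for composable `(s,t)`. -/
  preimage_eq : ∀ s t, G.Composable s t →
    {x | x ∈ dom (G.inv t) ∧ act t x ∈ dom t ∩ dom (G.inv s)}
      = dom (G.inv (G.mul s t)) ∩ dom (G.inv t)
  /-- (P3) `θ_s (θ_t x) = θ_{st} x` on `X_{(st)*} ∩ X_{t*}`. -/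
  mul_act : ∀ s t, G.Composable s t →
    ∀ x ∈ dom (G.inv (G.mul s t)) ∩ dom (G.inv t),
      act s (act t x) = act (G.mul s t) x

namespace PAction
variable {S O X : Type*} {G : InvSgpd S O}

/-- A partial action is global when `X_s = X_{ss*}` for every `s`. -/
def IsGlobal (θ : PAction G X) : Prop := ∀ s, θ.dom s = θ.dom (G.mul s (G.inv s))

end PAction

/-!
Since `θ` is global, `θ_{s*}` inverts `θ_s` on `Y_{s*}`, so `x ∈ X_s` just says `x ∈ Y_s` and
`θ_{s*} x ∈ X`; in particular `X_e = X ∩ Y_e` for idempotent `e`. On `X_{s*}` the restriction acts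
by `θ_s`, so each axiom for `θ|_X` is the corresponding axiom for `θ` plus the check that the
points involved stay in `X`.
-/

namespace InvSgpd

variable {S O : Type*} (G : InvSgpd S O)

theorem inv_inv (s : S) : G.inv (G.inv s) = s :=
  (G.inv_unique (G.inv s) s (G.inv_comp s) (G.comp_inv s)
    (G.inv_mul_inv s) (G.mul_inv_mul s)).symm

variable {G} in
theorem Idem.inv_eq {e : S} (he : G.Idem e) : G.inv e = e :=
  (G.inv_unique e e he.1 he.1 (by rw [he.2, he.2]) (by rw [he.2, he.2])).symm

theorem idem_inv_mul_self (s : S) : G.Idem (G.mul (G.inv s) s) := by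
  have hc : G.d s = G.c (G.mul (G.inv s) s) := by
    rw [G.c_mul _ _ (G.inv_comp s), ← G.comp_inv s]
  refine ⟨?_, ?_⟩
  · rw [Composable, G.d_mul _ _ (G.inv_comp s), ← hc]
  · calc G.mul (G.mul (G.inv s) s) (G.mul (G.inv s) s)
        = G.mul (G.inv s) (G.mul s (G.mul (G.inv s) s)) :=
          G.assoc (G.inv s) s _ (G.inv_comp s) hc
      _ = G.mul (G.inv s) s := by
          rw [← G.assoc s (G.inv s) s (G.comp_inv s) (G.inv_comp s), G.mul_inv_mul]

theorem idem_mul_inv_self (s : S) : G.Idem (G.mul s (G.inv s)) := by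
  simpa only [inv_inv] using G.idem_inv_mul_self (G.inv s)

end InvSgpd

namespace PAction

open InvSgpd

variable {S O Y : Type*} {G : InvSgpd S O} (θ : PAction G Y)

theorem act_mem_dom_inv_iff {s t : S} (hst : G.Composable s t) {y : Y}
    (hy : y ∈ θ.dom (G.inv t)) :
    θ.act t y ∈ θ.dom (G.inv s) ↔ y ∈ θ.dom (G.inv (G.mul s t)) := by
  have h := Set.ext_iff.mp (θ.preimage_eq s t hst) y
  exact ⟨fun hs => (h.mp ⟨hy, θ.maps t y hy, hs⟩).1, fun hyst => (h.mpr ⟨hyst, hy⟩).2.2⟩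

variable {θ}

theorem act_inv_act (hθ : θ.IsGlobal) (s : S) {y : Y} (hy : y ∈ θ.dom (G.inv s)) :
    θ.act (G.inv s) (θ.act s y) = y := by
  have he := G.idem_inv_mul_self s
  have hy' : y ∈ θ.dom (G.mul (G.inv s) s) := by
    simpa only [hθ (G.inv s), inv_inv] using hy
  rw [θ.mul_act (G.inv s) s (G.inv_comp s) y ⟨by rwa [he.inv_eq], hy⟩, θ.idem_id _ he y hy']

theorem act_act_inv (hθ : θ.IsGlobal) (s : S) {y : Y} (hy : y ∈ θ.dom s) :
    θ.act s (θ.act (G.inv s) y) = y := by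
  simpa only [inv_inv] using act_inv_act hθ (G.inv s) (y := y) (by rwa [inv_inv])

theorem mem_image_inter_dom_iff (hθ : θ.IsGlobal) (X : Set Y) (s : S) (y : Y) :
    y ∈ θ.act s '' (X ∩ θ.dom (G.inv s)) ↔ y ∈ θ.dom s ∧ θ.act (G.inv s) y ∈ X := by
  constructor
  · rintro ⟨x, ⟨hxX, hx⟩, rfl⟩
    exact ⟨θ.maps s x hx, by rwa [act_inv_act hθ s hx]⟩
  · rintro ⟨hy, hyX⟩
    exact ⟨_, ⟨hyX, θ.maps (G.inv s) y (by rwa [inv_inv])⟩, act_act_inv hθ s hy⟩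

section Restriction

variable (θ) (X : Set Y)

def restrictDom (s : S) : Set X := {x | (x : Y) ∈ θ.act s '' (X ∩ θ.dom (G.inv s))}

open scoped Classical in
noncomputable def restrictAct (s : S) (x : X) : X :=
  if h : (x : Y) ∈ θ.dom (G.inv s) ∧ θ.act s (x : Y) ∈ X then ⟨θ.act s x, h.2⟩ else x

variable {θ X} (hθ : θ.IsGlobal)
include hθ

theorem mem_restrictDom {s : S} {x : X} :
    x ∈ θ.restrictDom X s ↔ (x : Y) ∈ θ.dom s ∧ θ.act (G.inv s) x ∈ X :=
  mem_image_inter_dom_iff hθ X s x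

theorem mem_restrictDom_inv {s : S} {x : X} :
    x ∈ θ.restrictDom X (G.inv s) ↔ (x : Y) ∈ θ.dom (G.inv s) ∧ θ.act s x ∈ X := by
  rw [mem_restrictDom hθ, inv_inv]

theorem mem_restrictDom_of_idem {e : S} (he : G.Idem e) {x : X} :
    x ∈ θ.restrictDom X e ↔ (x : Y) ∈ θ.dom e := by
  rw [mem_restrictDom hθ, he.inv_eq]
  exact ⟨And.left, fun hx => ⟨hx, by rw [θ.idem_id e he x hx]; exact x.2⟩⟩

theorem coe_restrictAct {s : S} {x : X} (hx : x ∈ θ.restrictDom X (G.inv s)) :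
    (θ.restrictAct X s x : Y) = θ.act s x := by
  rw [restrictAct, dif_pos ((mem_restrictDom_inv hθ).mp hx)]

theorem restrictAct_mem_restrictDom {s : S} {x : X} (hx : x ∈ θ.restrictDom X (G.inv s)) :
    θ.restrictAct X s x ∈ θ.restrictDom X s := by
  obtain ⟨hxs, -⟩ := (mem_restrictDom_inv hθ).mp hx
  rw [mem_restrictDom hθ, coe_restrictAct hθ hx, act_inv_act hθ s hxs]
  exact ⟨θ.maps s x hxs, x.2⟩

theorem restrictAct_mem_restrictDom_inv_iff {s t : S} (hst : G.Composable s t) {x : X}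
    (hx : x ∈ θ.restrictDom X (G.inv t)) :
    θ.restrictAct X t x ∈ θ.restrictDom X (G.inv s) ↔
      x ∈ θ.restrictDom X (G.inv (G.mul s t)) := by
  obtain ⟨hxt, -⟩ := (mem_restrictDom_inv hθ).mp hx
  rw [mem_restrictDom_inv hθ, mem_restrictDom_inv hθ, coe_restrictAct hθ hx,
    act_mem_dom_inv_iff θ hst hxt]
  exact and_congr_right fun hxst => by rw [θ.mul_act s t hst x ⟨hxst, hxt⟩]

variable (θ X) in
noncomputable def restrict : PAction G X where
  dom := θ.restrictDom X
  act := θ.restrictAct X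
  maps _ _ := restrictAct_mem_restrictDom hθ
  idem_id e he x hx := Subtype.ext <| by
    rw [coe_restrictAct hθ (by rwa [he.inv_eq])]
    exact θ.idem_id e he x ((mem_restrictDom_of_idem hθ he).mp hx)
  cover x :=
    let ⟨e, he, hx⟩ := θ.cover x
    ⟨e, he, (mem_restrictDom_of_idem hθ he).mpr hx⟩
  dom_mono s x hx := (mem_restrictDom_of_idem hθ (G.idem_mul_inv_self s)).mpr <| by
    rw [← hθ s]
    exact ((mem_restrictDom hθ).mp hx).1
  preimage_eq s t hst := by
    ext x
    constructor
    · rintro ⟨hx, -, hs⟩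
      exact ⟨(restrictAct_mem_restrictDom_inv_iff hθ hst hx).mp hs, hx⟩
    · rintro ⟨hxst, hx⟩
      exact ⟨hx, restrictAct_mem_restrictDom hθ hx,
        (restrictAct_mem_restrictDom_inv_iff hθ hst hx).mpr hxst⟩
  mul_act s t hst x := fun ⟨hxst, hx⟩ => Subtype.ext <| by
    rw [coe_restrictAct hθ ((restrictAct_mem_restrictDom_inv_iff hθ hst hx).mpr hxst),
      coe_restrictAct hθ hx, coe_restrictAct hθ hxst,
      θ.mul_act s t hst x
        ⟨((mem_restrictDom_inv hθ).mp hxst).1, ((mem_restrictDom_inv hθ).mp hx).1⟩]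

end Restriction

end PAction

open scoped Classical in
/-- Restricting a global action `θ` of `G` on `Y` to a subset `X ⊆ Y`, via
`X_s := θ_s(X ∩ Y_{s*}) ∩ X`, yields a partial action of `G` on `X`. -/
theorem restriction_is_paction {S O Y : Type*} (G : InvSgpd S O)
    (θ : PAction G Y) (hθ : θ.IsGlobal) (Xset : Set Y) :
    ∃ P : PAction G Xset,
      (∀ s, P.dom s =
        {x : Xset | (x : Y) ∈ θ.act s '' {y | y ∈ Xset ∧ y ∈ θ.dom (G.inv s)}}) ∧
      (∀ s (x : Xset),
        P.act s x =
          if h : (x : Y) ∈ θ.dom (G.inv s) ∧ θ.act s (x : Y) ∈ Xset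
          then (⟨θ.act s (x : Y), h.2⟩ : Xset) else x) :=
  ⟨θ.restrict Xset hθ, fun _ => rfl, fun _ _ => rfl⟩
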